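/- arXiv:1707.05398 — 3 statements merged into one kernel-verified Lean document; each statement's English description precedes it below -/
import Mathlib

section
/- Fix constants M > 0, ρ > 0, τ > 0 and a constant B ≥ 0. Let (a[t])_{t≥1}, (s[t])_{t≥1} be nonnegative sequences with a[t] ≤ B for all t (bounded arrivals). Define two queue processes with Q[0] = λ[0] = 0 by Q[t] ≤ [Q[t−1] − s[t]]₊ + a[t] and λ[t] = λ[t−1] − ρτ·s[t] + ρτ·a[t]. If |λ[t]| ≤ M for all t, then Q[t] ≤ 2M/(ρτ) + B for all t. -/
/-!
Shift the virtual queue to `λ̂ = λ + M + ρτB`. Since `λ ≥ -M`, the shifted queue never drops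
below `ρτB`, so it dominates `ρτ` times any queue whose arrivals are at most `B`, whether that
queue is emptied (then `ρτ Q ≤ ρτ a ≤ ρτ B`) or not (then both evolve by `-s + a`, up to the
factor `ρτ`). Finally `λ ≤ M` gives `ρτ Q ≤ 2M + ρτB`.
-/

theorem mul_le_of_le_max_sub_add {c q q' s a B l l' : ℝ} (hc : 0 ≤ c)
    (hq' : q' ≤ max (q - s) 0 + a) (haB : a ≤ B) (hl' : l' = l - c * s + c * a)
    (hq : c * q ≤ l) (hBl' : c * B ≤ l') : c * q' ≤ l' := by
  rcases le_total (q - s) 0 with hemp | hbusy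
  · calc c * q' ≤ c * B := by
          apply mul_le_mul_of_nonneg_left _ hc
          linarith [max_eq_right hemp]
      _ ≤ l' := hBl'
  · calc c * q' ≤ c * (q - s + a) := by
          apply mul_le_mul_of_nonneg_left _ hc
          linarith [max_eq_left hbusy]
      _ ≤ l' := by rw [hl']; linarith

theorem mul_le_of_queue_le {c B : ℝ} {Q L a s : ℕ → ℝ} (hc : 0 ≤ c) (hQ0 : c * Q 0 ≤ L 0)
    (hQ : ∀ t, Q (t + 1) ≤ max (Q t - s (t + 1)) 0 + a (t + 1)) (haB : ∀ t, a t ≤ B)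
    (hL : ∀ t, L (t + 1) = L t - c * s (t + 1) + c * a (t + 1)) (hBL : ∀ t, c * B ≤ L t) :
    ∀ t, c * Q t ≤ L t
  | 0 => hQ0
  | t + 1 => mul_le_of_le_max_sub_add hc (hQ t) (haB _) (hL t)
      (mul_le_of_queue_le hc hQ0 hQ haB hL hBL t) (hBL _)

theorem stmt7_general (M ρ τ B : ℝ) (hρ : 0 < ρ) (hτ : 0 < τ) (hB : 0 ≤ B)
    (Q lam a s : ℕ → ℝ)
    (haB : ∀ t, a t ≤ B)
    (hQ0 : Q 0 = 0)
    (hQ : ∀ t : ℕ, 1 ≤ t → Q t ≤ max (Q (t - 1) - s t) 0 + a t)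
    (hlam : ∀ t : ℕ, 1 ≤ t → lam t = lam (t - 1) - ρ * τ * s t + ρ * τ * a t)
    (hlamM : ∀ t, |lam t| ≤ M) :
    ∀ t, Q t ≤ 2 * M / (ρ * τ) + B := by
  have hc : 0 < ρ * τ := mul_pos hρ hτ
  have hBL : ∀ t, ρ * τ * B ≤ lam t + M + ρ * τ * B := fun t => by
    linarith [neg_le_of_abs_le (hlamM t)]
  have hQL : ∀ t, ρ * τ * Q t ≤ lam t + M + ρ * τ * B := by
    refine mul_le_of_queue_le hc.le ?_ (fun t => by simpa using hQ (t + 1) (by omega)) haB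
      (fun t => by rw [hlam (t + 1) (by omega), Nat.add_sub_cancel]; ring) hBL
    rw [hQ0, mul_zero]
    exact (mul_nonneg hc.le hB).trans (hBL 0)
  intro t
  rw [div_add' _ _ _ hc.ne', le_div_iff₀ hc]
  linarith [hQL t, le_of_abs_le (hlamM t)]

/-- Scalar physical/virtual queue comparison: if the virtual queue `λ` (updated without
projection) stays bounded by `M`, then the physical queue `Q` (updated with the
positive-part projection) is bounded by `2M/(ρτ) + B`. -/
theorem stmt7 (M ρ τ B : ℝ) (hM : 0 < M) (hρ : 0 < ρ) (hτ : 0 < τ) (hB : 0 ≤ B)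
    (Q lam a s : ℕ → ℝ)
    (ha : ∀ t, 0 ≤ a t) (hs : ∀ t, 0 ≤ s t) (haB : ∀ t, a t ≤ B)
    (hQ0 : Q 0 = 0) (hlam0 : lam 0 = 0)
    (hQ : ∀ t : ℕ, 1 ≤ t → Q t ≤ max (Q (t - 1) - s t) 0 + a t)
    (hlam : ∀ t : ℕ, 1 ≤ t → lam t = lam (t - 1) - ρ * τ * s t + ρ * τ * a t)
    (hlamM : ∀ t, |lam t| ≤ M) :
    ∀ t, Q t ≤ 2 * M / (ρ * τ) + B :=
  stmt7_general M ρ τ B hρ hτ hB Q lam a s haB hQ0 hQ hlam hlamM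
end

section
/- Consider the projection of a point v ∈ ℝᴰ onto the simplex S = {r ∈ ℝᴰ : Σ_d r_d ≤ C, r_d ≥ 0} with C > 0, i.e., the minimizer of ‖r − v‖² over S. If Σ_d [v_d]₊ ≤ C then the projection is r_d = [v_d]₊. Otherwise the projection has the form r_d = [v_d − θ*]₊ where θ* > 0 is the unique real number satisfying Σ_d [v_d − θ*]₊ = C. -/
open Finset

/-!
Write `p = [v - θ]₊`. For every coordinate, `(r_d - p_d) (p_d - v_d) ≥ -θ (r_d - p_d)` when
`r_d ≥ 0`, with equality where `v_d > θ`. Summing, `⟪r - p, p - v⟫ ≥ θ (C - Σ r) ≥ 0` as soon as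
the complementary slackness `θ (C - Σ p) = 0` holds, and then `p` is the nearest feasible point to
`v`. Slackness holds for `θ = 0`, which gives the first case. In the second case,
`θ ↦ Σ_d [v_d - θ]₊` is continuous, equals `Σ_d [v_d]₊ > C` at `0` and vanishes at `Σ_d [v_d]₊`,
so it takes the value `C` at some `θ* > 0`; it is strictly decreasing wherever it is positive,
so `θ*` is unique.
-/

section SimplexProjection

variable {ι : Type*} [Fintype ι]

lemma sum_sq_sub_le_sum_sq_sub_of_sum_mul_nonneg {p r v : ι → ℝ}
    (h : 0 ≤ ∑ i, (r i - p i) * (p i - v i)) :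
    ∑ i, (p i - v i) ^ 2 ≤ ∑ i, (r i - v i) ^ 2 := by
  have hsq : 0 ≤ ∑ i, (r i - p i) ^ 2 := sum_nonneg fun i _ => sq_nonneg _
  have hexpand : ∑ i, (r i - v i) ^ 2
      = ∑ i, (r i - p i) ^ 2 + 2 * ∑ i, (r i - p i) * (p i - v i) + ∑ i, (p i - v i) ^ 2 := by
    rw [mul_sum, ← sum_add_distrib, ← sum_add_distrib]
    exact sum_congr rfl fun i _ => by ring
  linarith

lemma neg_mul_sub_max_le {x y θ : ℝ} (hy : 0 ≤ y) :
    -θ * (y - max (x - θ) 0) ≤ (y - max (x - θ) 0) * (max (x - θ) 0 - x) := by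
  rcases le_or_gt (x - θ) 0 with h | h
  · rw [max_eq_right h]
    nlinarith
  · rw [max_eq_left h.le]
    nlinarith

/-- `θ` plays the role of the Lagrange multiplier of the constraint `Σ r ≤ C`. -/
theorem isMinOn_max_sub_of_slack {v : ι → ℝ} {C θ : ℝ} (hθ : 0 ≤ θ)
    (hslack : θ * (C - ∑ i, max (v i - θ) 0) = 0) :
    IsMinOn (fun r => ∑ i, (r i - v i) ^ 2) {r | ∑ i, r i ≤ C ∧ ∀ i, 0 ≤ r i}
      (fun i => max (v i - θ) 0) := by
  rintro r ⟨hrC, hr0⟩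
  apply sum_sq_sub_le_sum_sq_sub_of_sum_mul_nonneg
  have hpointwise : -θ * (∑ i, r i - ∑ i, max (v i - θ) 0)
      ≤ ∑ i, (r i - max (v i - θ) 0) * (max (v i - θ) 0 - v i) := by
    rw [← sum_sub_distrib, mul_sum]
    exact sum_le_sum fun i _ => neg_mul_sub_max_le (hr0 i)
  nlinarith

lemma sum_max_sub_lt_of_lt {v : ι → ℝ} {a b : ℝ} (hab : a < b)
    (ha : 0 < ∑ i, max (v i - a) 0) :
    ∑ i, max (v i - b) 0 < ∑ i, max (v i - a) 0 := by
  obtain ⟨j, -, hj⟩ := exists_lt_of_sum_lt (f := fun _ => (0 : ℝ)) (by simpa using ha)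
  have hvj : 0 < v j - a := lt_max_iff.1 hj |>.resolve_right (lt_irrefl 0)
  refine sum_lt_sum (fun i _ => max_le_max (by linarith) le_rfl) ⟨j, mem_univ j, ?_⟩
  rw [max_eq_left hvj.le]
  exact max_lt (by linarith) hvj

lemma eq_of_sum_max_sub_eq {v : ι → ℝ} {a b C : ℝ} (hC : 0 < C)
    (ha : ∑ i, max (v i - a) 0 = C) (hb : ∑ i, max (v i - b) 0 = C) : a = b := by
  rcases lt_trichotomy a b with h | h | h
  · exact absurd (ha ▸ hb) (sum_max_sub_lt_of_lt h (ha ▸ hC)).ne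
  · exact h
  · exact absurd (hb ▸ ha) (sum_max_sub_lt_of_lt h (hb ▸ hC)).ne

lemma exists_pos_sum_max_sub_eq {v : ι → ℝ} {C : ℝ} (hC : 0 ≤ C)
    (hvC : C < ∑ i, max (v i) 0) :
    ∃ θ, 0 < θ ∧ ∑ i, max (v i - θ) 0 = C := by
  set B := ∑ i, max (v i) 0
  have hcont : Continuous fun θ : ℝ => ∑ i, max (v i - θ) 0 := by fun_prop
  have hB : ∑ i, max (v i - B) 0 = 0 := by
    refine sum_eq_zero fun i _ => max_eq_right ?_
    have : max (v i) 0 ≤ B := single_le_sum (fun j _ => le_max_right (v j) 0) (mem_univ i)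
    linarith [le_max_left (v i) 0]
  have hCmem : C ∈ Set.Icc (∑ i, max (v i - B) 0) (∑ i, max (v i - 0) 0) := by
    simp only [hB, sub_zero]
    exact ⟨hC, hvC.le⟩
  obtain ⟨θ, hθ, hθC⟩ := intermediate_value_Icc' (by linarith) hcont.continuousOn hCmem
  refine ⟨θ, lt_of_le_of_ne hθ.1 ?_, hθC⟩
  rintro rfl
  simp only [sub_zero] at hθC
  exact hvC.ne' hθC

end SimplexProjection

/-- Projection onto the simplex `{r : Σ_d r_d ≤ C, r ≥ 0}`: if `Σ_d [v_d]₊ ≤ C` the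
projection is `[v]₊`; otherwise it is `[v − θ*]₊` for the unique `θ* > 0` with
`Σ_d [v_d − θ*]₊ = C`. A point `p` is "the projection" iff it is feasible and minimizes
the squared Euclidean distance to `v` over the simplex. -/
theorem stmt9 {D : ℕ} (C : ℝ) (hC : 0 < C) (v : Fin D → ℝ)
    (S : Set (Fin D → ℝ))
    (hS : S = {r : Fin D → ℝ | (∑ d, r d) ≤ C ∧ ∀ d, 0 ≤ r d})
    (IsProj : (Fin D → ℝ) → Prop)
    (hIsProj : ∀ p, IsProj p ↔ p ∈ S ∧ ∀ r ∈ S, (∑ d, (p d - v d) ^ 2) ≤ ∑ d, (r d - v d) ^ 2) :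
    ((∑ d, max (v d) 0) ≤ C → IsProj (fun d => max (v d) 0)) ∧
    ((∑ d, max (v d) 0) > C →
      ∃! θ : ℝ, 0 < θ ∧ (∑ d, max (v d - θ) 0) = C ∧ IsProj (fun d => max (v d - θ) 0)) := by
  subst hS
  have hproj : ∀ θ, 0 ≤ θ → ∑ d, max (v d - θ) 0 ≤ C →
      θ * (C - ∑ d, max (v d - θ) 0) = 0 → IsProj fun d => max (v d - θ) 0 :=
    fun θ hθ hle hslack => (hIsProj _).2
      ⟨⟨hle, fun _ => le_max_right _ _⟩, isMinOn_iff.1 (isMinOn_max_sub_of_slack hθ hslack)⟩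
  refine ⟨fun hle => by simpa using hproj 0 le_rfl (by simpa using hle) (zero_mul _), fun hgt => ?_⟩
  obtain ⟨θ, hθ, hθC⟩ := exists_pos_sum_max_sub_eq hC.le hgt
  exact ⟨θ, ⟨hθ, hθC, hproj θ hθ.le hθC.le (by simp [hθC])⟩,
    fun θ' ⟨_, hθ'C, _⟩ => eq_of_sum_max_sub_eq hC hθ'C hθC⟩
end

section
/- Let w ∈ ℤᴰ, B ∈ ℕ a bound with 0 ≤ r_d ≤ B for all feasible r, and let (r*, y*) be a δ-approximate maximizer (for δ < 1) of the quadratic objective (LDB²+1)·Σ_l w_l y_l − Σ_{l,d} (r_l^d)² over a feasible set where all feasible y are integer vectors with y_l = Σ_d r_l^d. Then y* exactly maximizes the linear objective Σ_l w_l y_l over feasible y, i.e., Σ_l w_l y_l* ≥ Σ_l w_l y_l for all feasible integer y. -/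
open Finset

/-!
Both sides of the approximate-optimality inequality differ from `M` times the linear
objective by at most `M - 1 = L·D·B²` (the quadratic penalty of any feasible point) plus
`δ < 1`. So if some feasible `y` beat `y*` on the integer-valued linear objective, hence by
at least `1`, its scaled gain `M` would exceed everything the penalty and `δ` can absorb.
-/

theorem Int.le_of_mul_sub_le_mul_sub {a b : ℤ} {M p q δ : ℝ} (hM : 0 ≤ M)
    (hgap : p - q + δ < M) (h : M * a - p - δ ≤ M * b - q) : a ≤ b := by
  by_contra! hba
  have hstep : (b : ℝ) + 1 ≤ a := by exact_mod_cast hba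
  nlinarith

theorem sum_sum_sq_le_of_le {ι κ : Type*} [Fintype ι] [Fintype κ] {f : ι → κ → ℕ} {B : ℕ}
    (hf : ∀ i k, f i k ≤ B) :
    ∑ i, ∑ k, (f i k : ℝ) ^ 2 ≤ Fintype.card ι * Fintype.card κ * (B : ℝ) ^ 2 := by
  calc ∑ i, ∑ k, (f i k : ℝ) ^ 2 ≤ ∑ _i : ι, ∑ _k : κ, (B : ℝ) ^ 2 := by
        gcongr with i _ k _
        exact_mod_cast hf i k
    _ = Fintype.card ι * Fintype.card κ * (B : ℝ) ^ 2 := by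
        simp only [sum_const, card_univ, nsmul_eq_mul]
        ring

theorem stmt16_general (L D B : ℕ) (w : Fin L → ℤ) (δ : ℝ) (hδ : δ < 1)
    (Feas : Set ((Fin L → Fin D → ℕ) × (Fin L → ℕ)))
    (hFeas : ∀ p ∈ Feas, (∀ l, p.2 l = ∑ d, p.1 l d) ∧ ∀ l d, p.1 l d ≤ B)
    (rStar : Fin L → Fin D → ℕ) (yStar : Fin L → ℕ)
    (happrox : ∀ p ∈ Feas,
      ((L * D * B ^ 2 + 1 : ℝ)) * ∑ l, (w l : ℝ) * (p.2 l : ℝ) -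
          (∑ l, ∑ d, ((p.1 l d : ℝ)) ^ 2) - δ ≤
        ((L * D * B ^ 2 + 1 : ℝ)) * ∑ l, (w l : ℝ) * (yStar l : ℝ) -
          ∑ l, ∑ d, ((rStar l d : ℝ)) ^ 2) :
    ∀ p ∈ Feas, (∑ l, w l * (p.2 l : ℤ)) ≤ ∑ l, w l * (yStar l : ℤ) := by
  intro p hp
  have hpenalty : ∑ l, ∑ d, (p.1 l d : ℝ) ^ 2 ≤ L * D * B ^ 2 := by
    simpa using sum_sum_sq_le_of_le (hFeas p hp).2
  have hstar : 0 ≤ ∑ l, ∑ d, (rStar l d : ℝ) ^ 2 := by positivity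
  have hcast (y : Fin L → ℕ) :
      ∑ l, (w l : ℝ) * (y l : ℝ) = ((∑ l, w l * (y l : ℤ) : ℤ) : ℝ) := by
    push_cast
    rfl
  have happrox_p := happrox p hp
  rw [hcast, hcast] at happrox_p
  exact Int.le_of_mul_sub_le_mul_sub (by positivity) (by linarith) happrox_p

/-- Scaling reduction from the quadratic scheduling objective to MaxWeight: a
`δ`-approximate maximizer (with `δ < 1`) of
`(LDB²+1)·Σ_l w_l y_l − Σ_{l,d} (r_l^d)²` over a feasible set of integer link-rate
vectors bounded by `B` (with `y_l = Σ_d r_l^d`) exactly maximizes the linear objective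
`Σ_l w_l y_l`. -/
theorem stmt16 (L D B : ℕ) (w : Fin L → ℤ) (δ : ℝ) (hδ0 : 0 ≤ δ) (hδ : δ < 1)
    (Feas : Set ((Fin L → Fin D → ℕ) × (Fin L → ℕ)))
    (hFeas : ∀ p ∈ Feas, (∀ l, p.2 l = ∑ d, p.1 l d) ∧ ∀ l d, p.1 l d ≤ B)
    (rStar : Fin L → Fin D → ℕ) (yStar : Fin L → ℕ) (hmem : (rStar, yStar) ∈ Feas)
    (happrox : ∀ p ∈ Feas,
      ((L * D * B ^ 2 + 1 : ℝ)) * ∑ l, (w l : ℝ) * (p.2 l : ℝ) -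
          (∑ l, ∑ d, ((p.1 l d : ℝ)) ^ 2) - δ ≤
        ((L * D * B ^ 2 + 1 : ℝ)) * ∑ l, (w l : ℝ) * (yStar l : ℝ) -
          ∑ l, ∑ d, ((rStar l d : ℝ)) ^ 2) :
    ∀ p ∈ Feas, (∑ l, w l * (p.2 l : ℤ)) ≤ ∑ l, w l * (yStar l : ℤ) :=
  stmt16_general L D B w δ hδ Feas hFeas rStar yStar happrox
end
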